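/- Let α ≠ 0 be a real number. The planar control system ẋ = y² + y u₁ − (2/α) y² u₂, ẏ = 2y − u₁ − (1/α) y u₂ is STLC at the equilibrium (0, (0, α)), where 0 = (0,0) ∈ ℝ². -/

import Mathlib

open MeasureTheory Set

noncomputable section

/-- The state space `ℝⁿ` with the Euclidean norm. -/
abbrev Vec (n : ℕ) : Type := EuclideanSpace ℝ (Fin n)

/-- Lie bracket of vector fields on `ℝⁿ`: `[f,g](x) = Dg(x)·f(x) − Df(x)·g(x)`. -/
def lieBr {n : ℕ} (f g : Vec n → Vec n) : Vec n → Vec n :=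
  fun x => fderiv ℝ g x (f x) - fderiv ℝ f x (g x)

/-- Formal iterated-bracket expressions in `m` symbols. -/
inductive BrExpr (m : ℕ) : Type
  | leaf : Fin m → BrExpr m
  | br : BrExpr m → BrExpr m → BrExpr m

namespace BrExpr

/-- Evaluation of a formal bracket expression on vector fields. -/
def eval {n m : ℕ} (f : Fin m → Vec n → Vec n) : BrExpr m → Vec n → Vec n
  | leaf i => f i
  | br a b => lieBr (eval f a) (eval f b)

/-- Number of occurrences of the symbol `i` in a bracket expression. -/
def count {m : ℕ} (i : Fin m) : BrExpr m → ℕ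
  | leaf j => if j = i then 1 else 0
  | br a b => count i a + count i b

end BrExpr

/-- `u` is (a.e.) measurable and a.e. bounded by `C` on `[0, ε]`:
an `L^∞([0,ε])` membership together with `‖u‖_{L^∞} ≤ C`. -/
def MeasBdd (ε C : ℝ) (u : ℝ → ℝ) : Prop :=
  AEStronglyMeasurable u (volume.restrict (Icc 0 ε)) ∧
    ∀ᵐ t ∂(volume.restrict (Icc 0 ε)), |u t| ≤ C

/-- `u` belongs to `W^{1,∞}([0,ε])` with `‖u‖_{L^∞} + ‖u'‖_{L^∞} ≤ C`:
`u` is bounded by some `M` and Lipschitz with some constant `L` on `[0,ε]`,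
where `M + L ≤ C`. -/
def W1Bdd (ε C : ℝ) (u : ℝ → ℝ) : Prop :=
  ∃ M L : ℝ, 0 ≤ M ∧ 0 ≤ L ∧ (∀ t ∈ Icc (0:ℝ) ε, |u t| ≤ M) ∧
    LipschitzOnWith (Real.toNNReal L) u (Icc 0 ε) ∧ M + L ≤ C

/-- `z` is a solution of `ż = f₀(z) + u₁ f₁(z) + u₂ f₂(z)` on `[0,ε]`
(absolutely continuous with the prescribed a.e. derivative, in integral form). -/
def IsSol2 {n : ℕ} (f₀ f₁ f₂ : Vec n → Vec n) (u₁ u₂ : ℝ → ℝ) (ε : ℝ) (z : ℝ → Vec n) : Prop :=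
  ContinuousOn z (Icc 0 ε) ∧
    ∀ t ∈ Icc (0:ℝ) ε,
      z t = z 0 + ∫ s in (0:ℝ)..t, (f₀ (z s) + u₁ s • f₁ (z s) + u₂ s • f₂ (z s))

/-- `R₁(0)`: the span of the values at `0` of all iterated Lie brackets of
`f₀, f₁, f₂` containing `f₁` at most one time. -/
def R1span {n : ℕ} (f₀ f₁ f₂ : Vec n → Vec n) : Submodule ℝ (Vec n) :=
  Submodule.span ℝ {v | ∃ b : BrExpr 3, b.count 1 ≤ 1 ∧ b.eval ![f₀, f₁, f₂] 0 = v}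

/-- STLC at the equilibrium `(0,(0,u2eq))` for the two-input system
`ż = g₀(z) + u₁ g₁(z) + u₂ g₂(z)`. -/
def STLC2 {n : ℕ} (g₀ g₁ g₂ : Vec n → Vec n) (u2eq : ℝ) : Prop :=
  ∀ ε > (0:ℝ), ∃ η > (0:ℝ), ∀ z₀ ∈ Metric.ball (0 : Vec n) η, ∀ z₁ ∈ Metric.ball (0 : Vec n) η,
    ∃ (u₁ u₂ : ℝ → ℝ) (z : ℝ → Vec n),
      MeasBdd ε ε u₁ ∧ MeasBdd ε ε (fun t => u₂ t - u2eq) ∧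
      IsSol2 g₀ g₁ g₂ u₁ u₂ ε z ∧ z 0 = z₀ ∧ z ε = z₁

/-!
Freeze `u₂ = α (1 - δ)` and feed back `u₁ = (1 + δ) y - v`. The system becomes
`ẏ = v`, `d/dt (x + y²/2) = 3 δ y²`, so `y` can follow any `C¹` path `Y` from `y₀` to `y₁`,
and `x + y²/2` then changes by `3 δ ∫ Y²`, which reaches any prescribed value by the choice of `δ`
as soon as `∫ Y² > 0`. Taking for `Y` the linear interpolation plus a bump of height `c ≍ ε²`
gives `∫ Y² ≳ c² ε`, while the required change of `x + y²/2` is `O(η)`; hence `δ = O(η / (c² ε))`,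
and both controls stay `ε`-close to `(0, α)` once `η` is small enough.
-/

lemma measBdd_of_continuous {ε C : ℝ} {u : ℝ → ℝ} (hu : Continuous u)
    (hC : ∀ t ∈ Icc 0 ε, |u t| ≤ C) : MeasBdd ε C u :=
  ⟨hu.aestronglyMeasurable, (ae_restrict_iff' measurableSet_Icc).2 (ae_of_all _ hC)⟩

lemma isSol2_of_hasDerivAt {n : ℕ} {f₀ f₁ f₂ : Vec n → Vec n} {u₁ u₂ : ℝ → ℝ} {ε : ℝ}
    {z : ℝ → Vec n}
    (hz : ∀ t, HasDerivAt z (f₀ (z t) + u₁ t • f₁ (z t) + u₂ t • f₂ (z t)) t)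
    (hcont : Continuous fun t => f₀ (z t) + u₁ t • f₁ (z t) + u₂ t • f₂ (z t)) :
    IsSol2 f₀ f₁ f₂ u₁ u₂ ε z := by
  refine ⟨fun t _ => (hz t).continuousAt.continuousWithinAt, fun t _ => ?_⟩
  rw [intervalIntegral.integral_eq_sub_of_hasDerivAt (fun s _ => hz s)
    (hcont.intervalIntegrable _ _)]
  abel

lemma HasDerivAt.vec2 {a b : ℝ → ℝ} {a' b' t : ℝ} (ha : HasDerivAt a a' t)
    (hb : HasDerivAt b b' t) : HasDerivAt (fun s => (!₂[a s, b s] : Vec 2)) !₂[a', b'] t := by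
  have h : HasDerivAt (fun s => ![a s, b s]) ![a', b'] t :=
    hasDerivAt_pi.2 fun i => by fin_cases i <;> assumption
  exact (PiLp.hasFDerivAt_toLp (𝕜 := ℝ) 2 ![a t, b t]).comp_hasDerivAt t h

def planarDrift : Vec 2 → Vec 2 := fun z => !₂[(z 1) ^ 2, 2 * z 1]

def planarF₁ : Vec 2 → Vec 2 := fun z => !₂[z 1, -1]

def planarF₂ (α : ℝ) : Vec 2 → Vec 2 := fun z => !₂[-(2 / α) * (z 1) ^ 2, -(1 / α) * z 1]

lemma planar_feedback {α : ℝ} (hα : α ≠ 0) (δ v : ℝ) (z : Vec 2) :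
    planarDrift z + ((1 + δ) * z 1 - v) • planarF₁ z + (α * (1 - δ)) • planarF₂ α z =
      !₂[3 * δ * z 1 ^ 2 - z 1 * v, v] := by
  ext i
  fin_cases i <;> simp [planarDrift, planarF₁, planarF₂] <;> field_simp <;> ring

def quadCoord (z : Vec 2) : ℝ := z 0 + z 1 ^ 2 / 2

def feedbackTraj (w₀ δ : ℝ) (Y : ℝ → ℝ) (t : ℝ) : Vec 2 :=
  !₂[w₀ + 3 * δ * (∫ s in (0:ℝ)..t, Y s ^ 2) - Y t ^ 2 / 2, Y t]

lemma isSol2_feedbackTraj {α : ℝ} (hα : α ≠ 0) {Y Y' : ℝ → ℝ}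
    (hY : ∀ t, HasDerivAt Y (Y' t) t) (hY' : Continuous Y') (w₀ δ ε : ℝ) :
    IsSol2 planarDrift planarF₁ (planarF₂ α) (fun t => (1 + δ) * Y t - Y' t)
      (fun _ => α * (1 - δ)) ε (feedbackTraj w₀ δ Y) := by
  have hYc : Continuous Y := continuous_iff_continuousAt.2 fun t => (hY t).continuousAt
  have hfield : ∀ t, planarDrift (feedbackTraj w₀ δ Y t)
      + ((1 + δ) * Y t - Y' t) • planarF₁ (feedbackTraj w₀ δ Y t)
      + (α * (1 - δ)) • planarF₂ α (feedbackTraj w₀ δ Y t) =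
      !₂[3 * δ * Y t ^ 2 - Y t * Y' t, Y' t] := fun t =>
    planar_feedback hα δ (Y' t) (feedbackTraj w₀ δ Y t)
  refine isSol2_of_hasDerivAt (fun t => ?_) ?_
  · rw [hfield]
    refine HasDerivAt.vec2 ?_ (hY t)
    have hint : HasDerivAt (fun u => ∫ s in (0:ℝ)..u, Y s ^ 2) (Y t ^ 2) t :=
      intervalIntegral.integral_hasDerivAt_right ((hYc.pow 2).intervalIntegrable _ _)
        ((hYc.pow 2).stronglyMeasurableAtFilter _ _) (hYc.pow 2).continuousAt
    exact (((hint.const_mul (3 * δ)).const_add w₀).sub (((hY t).pow 2).div_const 2)).congr_deriv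
      (by push_cast; ring)
  · simp_rw [hfield]
    fun_prop

lemma feedbackTraj_eq {w₀ δ t : ℝ} {Y : ℝ → ℝ} {z : Vec 2}
    (hw : w₀ + 3 * δ * (∫ s in (0:ℝ)..t, Y s ^ 2) = quadCoord z) (hY : Y t = z 1) :
    feedbackTraj w₀ δ Y t = z := by
  ext i
  fin_cases i
  · simp only [feedbackTraj, quadCoord] at hw ⊢
    simp [hw, hY]
  · simp [feedbackTraj, hY]

lemma abs_quadCoord_le {η : ℝ} {z : Vec 2} (hz : ‖z‖ ≤ η) (hη : η ≤ 1) :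
    |quadCoord z| ≤ 3 / 2 * η := by
  have hx : |z 0| ≤ η := (PiLp.norm_apply_le z 0).trans hz
  have hy : |z 1| ≤ η := (PiLp.norm_apply_le z 1).trans hz
  have hy2 : z 1 ^ 2 ≤ η := by
    rw [← sq_abs]; nlinarith [abs_nonneg (z 1)]
  calc |quadCoord z| ≤ |z 0| + |z 1 ^ 2 / 2| := abs_add_le _ _
    _ ≤ 3 / 2 * η := by rw [abs_of_nonneg (by positivity : 0 ≤ z 1 ^ 2 / 2)]; linarith

lemma abs_quadCoord_sub_div_le {η c ε I : ℝ} {z₀ z₁ : Vec 2} (hz₀ : ‖z₀‖ ≤ η) (hz₁ : ‖z₁‖ ≤ η)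
    (hη : η ≤ 1) (hc : 0 < c) (hε : 0 < ε) (hI : c ^ 2 * ε / 4 ≤ I) :
    |(quadCoord z₁ - quadCoord z₀) / (3 * I)| ≤ 4 * η / (c ^ 2 * ε) := by
  have hI₀ : 0 < I := lt_of_lt_of_le (by positivity) hI
  have hη₀ : 0 ≤ η := (norm_nonneg _).trans hz₀
  have hΔ : |quadCoord z₁ - quadCoord z₀| ≤ 3 * η := by
    linarith [abs_sub (quadCoord z₁) (quadCoord z₀), abs_quadCoord_le hz₀ hη,
      abs_quadCoord_le hz₁ hη]
  rw [abs_div, abs_of_pos (by positivity : 0 < 3 * I)]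
  calc |quadCoord z₁ - quadCoord z₀| / (3 * I) ≤ 3 * η / (3 * (c ^ 2 * ε / 4)) := by
        gcongr
    _ = 4 * η / (c ^ 2 * ε) := by field_simp

lemma abs_feedbackControl_le {δ y v D A B : ℝ} (hδ : |δ| ≤ D) (hy : |y| ≤ A) (hv : |v| ≤ B) :
    |(1 + δ) * y - v| ≤ (1 + D) * A + B := calc
  |(1 + δ) * y - v| ≤ (1 + |δ|) * |y| + |v| := by
    refine (abs_sub _ _).trans ?_
    rw [abs_mul]
    gcongr
    exact (abs_add_le _ _).trans (by rw [abs_one])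
  _ ≤ (1 + D) * A + B := by
    have hD : 0 ≤ D := (abs_nonneg δ).trans hδ
    gcongr

lemma integral_mul_sub_sq (ε : ℝ) : ∫ t in (0:ℝ)..ε, (t * (ε - t)) ^ 2 = ε ^ 5 / 30 := by
  have h : ∀ t : ℝ, (t * (ε - t)) ^ 2 = ε ^ 2 * t ^ 2 - 2 * ε * t ^ 3 + t ^ 4 := fun t => by ring
  simp_rw [h]
  rw [intervalIntegral.integral_add (by apply Continuous.intervalIntegrable; fun_prop)
      (by apply Continuous.intervalIntegrable; fun_prop),
    intervalIntegral.integral_sub (by apply Continuous.intervalIntegrable; fun_prop)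
      (by apply Continuous.intervalIntegrable; fun_prop),
    intervalIntegral.integral_const_mul, intervalIntegral.integral_const_mul,
    integral_pow, integral_pow, integral_pow]
  ring

section BumpPath

variable {y₀ y₁ ε c η t : ℝ}

def bumpPath (y₀ y₁ ε c t : ℝ) : ℝ := y₀ + t / ε * (y₁ - y₀) + 4 * c / ε ^ 2 * (t * (ε - t))

def bumpPathDeriv (y₀ y₁ ε c t : ℝ) : ℝ := (y₁ - y₀) / ε + 4 * c / ε ^ 2 * (ε - 2 * t)

lemma hasDerivAt_bumpPath : HasDerivAt (bumpPath y₀ y₁ ε c) (bumpPathDeriv y₀ y₁ ε c t) t := by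
  have h := ((((hasDerivAt_id t).div_const ε).mul_const (y₁ - y₀)).const_add y₀).add
    ((((hasDerivAt_id t).mul ((hasDerivAt_id t).const_sub ε))).const_mul (4 * c / ε ^ 2))
  exact h.congr_deriv (by simp only [bumpPathDeriv, id]; ring)

lemma continuous_bumpPath : Continuous (bumpPath y₀ y₁ ε c) := by
  unfold bumpPath
  fun_prop

lemma continuous_bumpPathDeriv : Continuous (bumpPathDeriv y₀ y₁ ε c) := by
  unfold bumpPathDeriv
  fun_prop

lemma bumpPath_zero : bumpPath y₀ y₁ ε c 0 = y₀ := by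
  simp [bumpPath]

lemma bumpPath_self (hε : ε ≠ 0) : bumpPath y₀ y₁ ε c ε = y₁ := by
  simp [bumpPath, hε]

variable (hε : 0 < ε) (h₀ : |y₀| ≤ η) (h₁ : |y₁| ≤ η)
include hε h₀ h₁

lemma abs_interp_le (ht : t ∈ Icc 0 ε) : |y₀ + t / ε * (y₁ - y₀)| ≤ η :=
  abs_le.2 <| (convex_Icc (-η) η).add_smul_sub_mem (abs_le.1 h₀) (abs_le.1 h₁)
    ⟨div_nonneg ht.1 hε.le, (div_le_one hε).2 ht.2⟩

lemma abs_bumpPath_le (hc : 0 ≤ c) (ht : t ∈ Icc 0 ε) : |bumpPath y₀ y₁ ε c t| ≤ η + c := by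
  have hbump : 0 ≤ 4 * c / ε ^ 2 * (t * (ε - t)) :=
    mul_nonneg (by positivity) (mul_nonneg ht.1 (sub_nonneg.2 ht.2))
  have hbump' : 4 * c / ε ^ 2 * (t * (ε - t)) ≤ c := calc
    4 * c / ε ^ 2 * (t * (ε - t)) ≤ 4 * c / ε ^ 2 * (ε ^ 2 / 4) := by
      gcongr; nlinarith [sq_nonneg (ε - 2 * t)]
    _ = c := by field_simp
  calc |bumpPath y₀ y₁ ε c t| ≤ |y₀ + t / ε * (y₁ - y₀)| + |4 * c / ε ^ 2 * (t * (ε - t))| :=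
        abs_add_le _ _
    _ ≤ η + c := by rw [abs_of_nonneg hbump]; linarith [abs_interp_le hε h₀ h₁ ht]

lemma abs_bumpPathDeriv_le (hc : 0 ≤ c) (ht : t ∈ Icc 0 ε) :
    |bumpPathDeriv y₀ y₁ ε c t| ≤ (2 * η + 4 * c) / ε := by
  have hlin : |(y₁ - y₀) / ε| ≤ 2 * η / ε := by
    rw [abs_div, abs_of_pos hε]
    gcongr
    linarith [abs_sub y₁ y₀]
  have hbump : |4 * c / ε ^ 2 * (ε - 2 * t)| ≤ 4 * c / ε := by
    rw [abs_mul, abs_of_nonneg (by positivity : 0 ≤ 4 * c / ε ^ 2)]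
    calc 4 * c / ε ^ 2 * |ε - 2 * t| ≤ 4 * c / ε ^ 2 * ε := by
          gcongr; exact abs_le.2 ⟨by linarith [ht.2], by linarith [ht.1]⟩
      _ = 4 * c / ε := by field_simp
  calc |bumpPathDeriv y₀ y₁ ε c t| ≤ 2 * η / ε + 4 * c / ε :=
        (abs_add_le _ _).trans (add_le_add hlin hbump)
    _ = (2 * η + 4 * c) / ε := by ring

lemma le_integral_bumpPath_sq (hηc : 8 * η ≤ c) :
    c ^ 2 * ε / 4 ≤ ∫ t in (0:ℝ)..ε, bumpPath y₀ y₁ ε c t ^ 2 := by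
  have hη : 0 ≤ η := (abs_nonneg y₀).trans h₀
  -- `(p + q)² ≥ q² / 2 - p²` with `p` the interpolation and `q` the bump
  have hpt : ∀ t ∈ Icc 0 ε,
      8 * c ^ 2 / ε ^ 4 * (t * (ε - t)) ^ 2 - η ^ 2 ≤ bumpPath y₀ y₁ ε c t ^ 2 := by
    intro t ht
    have hp := abs_interp_le hε h₀ h₁ ht
    rw [← sq_le_sq₀ (abs_nonneg _) hη, sq_abs] at hp
    have hq : 8 * c ^ 2 / ε ^ 4 * (t * (ε - t)) ^ 2 = (4 * c / ε ^ 2 * (t * (ε - t))) ^ 2 / 2 := by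
      field_simp; ring
    rw [hq]
    unfold bumpPath
    nlinarith [sq_nonneg (2 * (y₀ + t / ε * (y₁ - y₀)) + 4 * c / ε ^ 2 * (t * (ε - t)))]
  have hmono := intervalIntegral.integral_mono_on (μ := volume) hε.le
    (f := fun t => 8 * c ^ 2 / ε ^ 4 * (t * (ε - t)) ^ 2 - η ^ 2)
    (g := fun t => bumpPath y₀ y₁ ε c t ^ 2) (by apply Continuous.intervalIntegrable; fun_prop)
    (by apply Continuous.intervalIntegrable; unfold bumpPath; fun_prop) hpt
  rw [intervalIntegral.integral_sub (by apply Continuous.intervalIntegrable; fun_prop)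
    intervalIntegrable_const, intervalIntegral.integral_const_mul, integral_mul_sub_sq,
    intervalIntegral.integral_const, smul_eq_mul, sub_zero] at hmono
  have hη2 : η ^ 2 ≤ c ^ 2 / 64 := by nlinarith
  have hval : 8 * c ^ 2 / ε ^ 4 * (ε ^ 5 / 30) = 4 * c ^ 2 * ε / 15 := by
    field_simp; ring
  nlinarith [mul_le_mul_of_nonneg_left hη2 hε.le, sq_nonneg c]

end BumpPath

open Filter Topology in
-- Given `|δ| ≤ 4 η / (c² ε)`, the last two conjuncts bound `|u₁|` and `|u₂ - α|` by `ε`.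
lemma exists_radius_controls_le {ε c : ℝ} (hε : 0 < ε) (hc : 0 < c) (hcε : c * (1 + 4 / ε) < ε)
    (a : ℝ) :
    ∃ η > 0, 8 * η ≤ c ∧ η ≤ 1 ∧
      (1 + 4 * η / (c ^ 2 * ε)) * (η + c) + (2 * η + 4 * c) / ε ≤ ε ∧
      a * (4 * η / (c ^ 2 * ε)) ≤ ε := by
  have h₁ : ∀ᶠ η in 𝓝 (0:ℝ), 8 * η < c :=
    ContinuousAt.eventually_lt (by fun_prop) continuousAt_const (by simpa using hc)
  have h₂ : ∀ᶠ η in 𝓝 (0:ℝ), η < 1 :=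
    ContinuousAt.eventually_lt continuousAt_id continuousAt_const one_pos
  have h₃ : ∀ᶠ η in 𝓝 (0:ℝ), (1 + 4 * η / (c ^ 2 * ε)) * (η + c) + (2 * η + 4 * c) / ε < ε :=
    ContinuousAt.eventually_lt (by fun_prop) continuousAt_const
      ((by ring : _ = c * (1 + 4 / ε)).trans_lt hcε)
  have h₄ : ∀ᶠ η in 𝓝 (0:ℝ), a * (4 * η / (c ^ 2 * ε)) < ε :=
    ContinuousAt.eventually_lt (by fun_prop) continuousAt_const (by simpa using hε)
  obtain ⟨η, ⟨⟨⟨h₁, h₂⟩, h₃⟩, h₄⟩, hη⟩ :=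
    ((((h₁.and h₂).and h₃).and h₄).filter_mono (nhdsWithin_le_nhds (s := Ioi 0))).and
      self_mem_nhdsWithin |>.exists
  exact ⟨η, hη, h₁.le, h₂.le, h₃.le, h₄.le⟩

/-- The planar system `ẋ = y² + y u₁ − (2/α) y² u₂`, `ẏ = 2y − u₁ − (1/α) y u₂`
(`α ≠ 0`) is STLC at the equilibrium `((0,0),(0,α))`. -/
theorem stmt12 (α : ℝ) (hα : α ≠ 0) :
    STLC2 (fun z : Vec 2 => !₂[(z 1) ^ 2, 2 * z 1])
      (fun z : Vec 2 => !₂[z 1, -1])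
      (fun z : Vec 2 => !₂[-(2 / α) * (z 1) ^ 2, -(1 / α) * z 1]) α := by
  show STLC2 planarDrift planarF₁ (planarF₂ α) α
  intro ε hε
  set c := ε ^ 2 / (2 * (ε + 4)) with hc_def
  have hc : 0 < c := by positivity
  have hcε : c * (1 + 4 / ε) < ε := by
    rw [hc_def]; field_simp; nlinarith
  obtain ⟨η, hη, hηc, hη1, hu₁, hu₂⟩ := exists_radius_controls_le hε hc hcε |α|
  refine ⟨η, hη, fun z₀ hz₀ z₁ hz₁ => ?_⟩
  rw [mem_ball_zero_iff] at hz₀ hz₁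
  have hy₀ : |z₀ 1| ≤ η := (PiLp.norm_apply_le z₀ 1).trans hz₀.le
  have hy₁ : |z₁ 1| ≤ η := (PiLp.norm_apply_le z₁ 1).trans hz₁.le
  set Y := bumpPath (z₀ 1) (z₁ 1) ε c
  set Y' := bumpPathDeriv (z₀ 1) (z₁ 1) ε c
  have hI := le_integral_bumpPath_sq hε hy₀ hy₁ hηc
  set δ := (quadCoord z₁ - quadCoord z₀) / (3 * ∫ t in (0:ℝ)..ε, Y t ^ 2) with hδ_def
  have hδ : |δ| ≤ 4 * η / (c ^ 2 * ε) := abs_quadCoord_sub_div_le hz₀.le hz₁.le hη1 hc hε hI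
  refine ⟨fun t => (1 + δ) * Y t - Y' t, fun _ => α * (1 - δ), feedbackTraj (quadCoord z₀) δ Y,
    measBdd_of_continuous
      ((continuous_const.mul continuous_bumpPath).sub continuous_bumpPathDeriv) fun t ht => ?_,
    measBdd_of_continuous continuous_const fun _ _ => ?_,
    isSol2_feedbackTraj hα (fun _ => hasDerivAt_bumpPath) continuous_bumpPathDeriv _ _ _,
    feedbackTraj_eq (by simp) bumpPath_zero, feedbackTraj_eq ?_ (bumpPath_self hε.ne')⟩
  · exact (abs_feedbackControl_le hδ (abs_bumpPath_le hε hy₀ hy₁ hc.le ht)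
      (abs_bumpPathDeriv_le hε hy₀ hy₁ hc.le ht)).trans hu₁
  · rw [show α * (1 - δ) - α = -(α * δ) by ring, abs_neg, abs_mul]
    exact (mul_le_mul_of_nonneg_left hδ (abs_nonneg α)).trans hu₂
  · have hI₀ : 0 < ∫ t in (0:ℝ)..ε, Y t ^ 2 := lt_of_lt_of_le (by positivity) hI
    rw [hδ_def]
    field_simp
    ring
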